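/- arXiv:2502.17195 — 2 statements merged into one kernel-verified Lean document; each statement's English description precedes it below -/
import Mathlib

section
/- Let P1 be a (K1,F1,Z1,S1) placement delivery array and P2 a (K2,F2,Z2,S2) placement delivery array. Construct an F1F2 × K1K2 array P by replacing each integer s ∈ [S1] in P1 by the array P2 + (s−1)S2 (where stars stay stars) and replacing each star in P1 by an F2 × K2 array of all stars. Then P is a (K1K2, F1F2, Z1F2 + (F1−Z1)Z2, S1S2) placement delivery array. -/
/-- A `(K,F,Z,S)` placement delivery array (PDA): an array indexed by rows `ι`
and columns `κ` with entries in `{*} ∪ [S]` (`none` is the star `*`) such that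
(A1) each column has exactly `Z` stars; all integers lie in `[S]`;
(A2) each integer of `[S]` appears at least once;
(A3) equal integer entries lie in distinct rows and columns, with stars at the
two crossing positions. -/
def IsPDA {ι κ : Type*} [Fintype ι] (Z S : ℕ) (P : ι → κ → Option ℕ) : Prop :=
  (∀ k : κ, (Finset.univ.filter (fun f : ι => P f k = none)).card = Z) ∧
  (∀ f k s, P f k = some s → s ∈ Finset.Icc 1 S) ∧
  (∀ s ∈ Finset.Icc 1 S, ∃ f k, P f k = some s) ∧
  (∀ f₁ k₁ f₂ k₂ s, (f₁, k₁) ≠ (f₂, k₂) →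
      P f₁ k₁ = some s → P f₂ k₂ = some s →
      f₁ ≠ f₂ ∧ k₁ ≠ k₂ ∧ P f₁ k₂ = none ∧ P f₂ k₁ = none)

/-- Algorithm 1: each integer `s` of `P1` is replaced by the block `P2 + (s-1)·S2`
(stars stay stars), and each star of `P1` is replaced by an all-star block. -/
def extendPDA {ι1 κ1 ι2 κ2 : Type*} (S2 : ℕ)
    (P1 : ι1 → κ1 → Option ℕ) (P2 : ι2 → κ2 → Option ℕ) :
    ι1 × ι2 → κ1 × κ2 → Option ℕ :=
  fun f k =>
    match P1 f.1 k.1 with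
    | none => none
    | some s => (P2 f.2 k.2).map (fun v => v + (s - 1) * S2)

lemma card_filter_prod {α β : Type*} [Fintype α] [Fintype β] (p : α × β → Prop) [DecidablePred p] :
    (Finset.univ.filter p).card = ∑ a : α, (Finset.univ.filter fun b => p (a,b)).card := by
  rw [Finset.card_filter, Fintype.sum_prod_type]
  exact Finset.sum_congr rfl fun a _ => (Finset.card_filter _ _).symm

lemma unique_decomp {v1 v2 s1 s2 S2 : ℕ} (hv1 : 1 ≤ v1) (hv1' : v1 ≤ S2)
    (hv2 : 1 ≤ v2) (hv2' : v2 ≤ S2) (hs1 : 1 ≤ s1) (hs2 : 1 ≤ s2)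
    (h : v1 + (s1 - 1) * S2 = v2 + (s2 - 1) * S2) : v1 = v2 ∧ s1 = s2 := by
  have hS : 0 < S2 := lt_of_lt_of_le hv1 hv1'
  have h' : (v1 - 1) + (s1 - 1) * S2 = (v2 - 1) + (s2 - 1) * S2 := by omega
  have hm : (v1 - 1) = (v2 - 1) := by
    have := congrArg (· % S2) h'
    simpa [Nat.add_mul_mod_self_right, Nat.mod_eq_of_lt (show v1 - 1 < S2 by omega),
      Nat.mod_eq_of_lt (show v2 - 1 < S2 by omega)] using this
  have hd : s1 - 1 = s2 - 1 := by
    have := congrArg (· / S2) h'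
    simpa [Nat.add_mul_div_right _ _ hS, Nat.div_eq_of_lt (show v1 - 1 < S2 by omega),
      Nat.div_eq_of_lt (show v2 - 1 < S2 by omega)] using this
  omega

lemma extendPDA_eq_none_of_left {ι1 κ1 ι2 κ2 : Type*} {S2 : ℕ}
    {P1 : ι1 → κ1 → Option ℕ} {P2 : ι2 → κ2 → Option ℕ}
    {f : ι1 × ι2} {k : κ1 × κ2} (h : P1 f.1 k.1 = none) :
    extendPDA S2 P1 P2 f k = none := by
  simp [extendPDA, h]

lemma extendPDA_eq_some {ι1 κ1 ι2 κ2 : Type*} {S2 : ℕ}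
    {P1 : ι1 → κ1 → Option ℕ} {P2 : ι2 → κ2 → Option ℕ}
    {f : ι1 × ι2} {k : κ1 × κ2} {s : ℕ} (h : extendPDA S2 P1 P2 f k = some s) :
    ∃ s1 v, P1 f.1 k.1 = some s1 ∧ P2 f.2 k.2 = some v ∧ s = v + (s1 - 1) * S2 := by
  unfold extendPDA at h
  cases h1 : P1 f.1 k.1 with
  | none => rw [h1] at h; simp at h
  | some s1 =>
    rw [h1] at h
    simp only [Option.map_eq_some_iff] at h
    obtain ⟨v, hv, hvs⟩ := h
    exact ⟨s1, v, rfl, hv, hvs.symm⟩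

/-- the extended array of a `(K1,F1,Z1,S1)` PDA and a
`(K2,F2,Z2,S2)` PDA is a `(K1K2, F1F2, Z1F2+(F1−Z1)Z2, S1S2)` PDA. -/
theorem extendPDA_isPDA {K1 F1 Z1 S1 K2 F2 Z2 S2 : ℕ}
    (P1 : Fin F1 → Fin K1 → Option ℕ) (P2 : Fin F2 → Fin K2 → Option ℕ)
    (h1 : IsPDA Z1 S1 P1) (h2 : IsPDA Z2 S2 P2) :
    IsPDA (Z1 * F2 + (F1 - Z1) * Z2) (S1 * S2) (extendPDA S2 P1 P2) := by
  obtain ⟨h1a, h1b, h1c, h1d⟩ := h1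
  obtain ⟨h2a, h2b, h2c, h2d⟩ := h2
  refine ⟨?_, ?_, ?_, ?_⟩
  · -- A1: star count per column
    intro k
    rw [card_filter_prod]
    have hcase : ∀ a : Fin F1,
        (Finset.univ.filter fun b : Fin F2 => extendPDA S2 P1 P2 (a,b) k = none).card
          = if P1 a k.1 = none then F2 else Z2 := by
      intro a
      cases h : P1 a k.1 with
      | none =>
        simp only [h, if_true]
        rw [Finset.filter_true_of_mem fun b _ => extendPDA_eq_none_of_left h]
        simp
      | some s =>
        simp only [h, reduceCtorEq, if_false]
        rw [← h2a k.2]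
        congr 1
        apply Finset.filter_congr
        intro b _
        unfold extendPDA
        rw [h]
        simp
    rw [Finset.sum_congr rfl fun a _ => hcase a, Finset.sum_ite, Finset.sum_const,
      Finset.sum_const, smul_eq_mul, smul_eq_mul, h1a k.1]
    have hsplit := Finset.card_filter_add_card_filter_not
      (s := (Finset.univ : Finset (Fin F1))) (fun a => P1 a k.1 = none)
    rw [h1a k.1, Finset.card_univ, Fintype.card_fin] at hsplit
    have : (Finset.univ.filter fun a : Fin F1 => ¬ P1 a k.1 = none).card = F1 - Z1 := by omega
    rw [this]
  · -- A2: range of integers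
    rintro f k s hs
    obtain ⟨s1, v, hP1, hP2, rfl⟩ := extendPDA_eq_some hs
    have hb1 := h1b _ _ _ hP1
    have hb2 := h2b _ _ _ hP2
    simp only [Finset.mem_Icc] at hb1 hb2 ⊢
    have hle : (s1 - 1) * S2 ≤ (S1 - 1) * S2 := Nat.mul_le_mul_right _ (by omega)
    have heq : (S1 - 1) * S2 + S2 = S1 * S2 := by
      rw [Nat.sub_one_mul]
      have : S2 ≤ S1 * S2 := Nat.le_mul_of_pos_left _ (by omega)
      omega
    omega
  · -- A3: every integer appears
    intro s hs
    simp only [Finset.mem_Icc] at hs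
    have hprod : 0 < S1 * S2 := by omega
    have hS2 : 0 < S2 := Nat.pos_of_ne_zero fun h => by subst h; simp at hprod
    have hdiv : (s - 1) / S2 < S1 := by
      rw [Nat.div_lt_iff_lt_mul hS2]
      calc s - 1 < s := by omega
        _ ≤ S1 * S2 := hs.2
    have hmod : (s - 1) % S2 < S2 := Nat.mod_lt _ hS2
    obtain ⟨f1, k1, hf1⟩ := h1c ((s - 1) / S2 + 1)
      (by simp only [Finset.mem_Icc]; exact ⟨Nat.le_add_left 1 _, hdiv⟩)
    obtain ⟨f2, k2, hf2⟩ := h2c ((s - 1) % S2 + 1)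
      (by simp only [Finset.mem_Icc]; exact ⟨Nat.le_add_left 1 _, hmod⟩)
    refine ⟨(f1, f2), (k1, k2), ?_⟩
    unfold extendPDA
    rw [hf1, hf2]
    simp only [Option.map_some]
    congr 1
    have h1' : ((s - 1) / S2 + 1 - 1) * S2 = ((s - 1) / S2) * S2 := by norm_num
    rw [h1']
    have h2' := Nat.mod_add_div' (s - 1) S2
    generalize hQ : (s - 1) / S2 * S2 = Q at h2' ⊢
    generalize hm : (s - 1) % S2 = m at h2' ⊢
    omega
  · -- A4
    rintro ⟨f1, f2⟩ ⟨k1, k2⟩ ⟨f1', f2'⟩ ⟨k1', k2'⟩ s hne hA hB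
    obtain ⟨sa, va, hPa1, hPa2, hsa⟩ := extendPDA_eq_some hA
    obtain ⟨sb, vb, hPb1, hPb2, hsb⟩ := extendPDA_eq_some hB
    simp only at hPa1 hPa2 hPb1 hPb2
    have hba := h1b _ _ _ hPa1
    have hbb := h1b _ _ _ hPb1
    have hva := h2b _ _ _ hPa2
    have hvb := h2b _ _ _ hPb2
    simp only [Finset.mem_Icc] at hba hbb hva hvb
    obtain ⟨hveq, hseq⟩ := unique_decomp hva.1 hva.2 hvb.1 hvb.2 hba.1 hbb.1
      (by omega : va + (sa - 1) * S2 = vb + (sb - 1) * S2)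
    subst hveq hseq
    by_cases hsame : (f1, k1) = (f1', k1')
    · -- same outer cell, apply inner PDA
      obtain ⟨hf, hk⟩ := Prod.mk.injEq .. ▸ hsame
      subst hf hk
      have hne2 : ((f2 : Fin F2), (k2 : Fin K2)) ≠ (f2', k2') := by
        intro h
        apply hne
        obtain ⟨h1, h2⟩ := Prod.mk.injEq .. ▸ h
        subst h1 h2
        rfl
      obtain ⟨hfne, hkne, hc1, hc2⟩ := h2d f2 k2 f2' k2' va hne2 hPa2 hPb2
      refine ⟨?_, ?_, ?_, ?_⟩
      · intro h; exact hfne (congrArg Prod.snd h)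
      · intro h; exact hkne (congrArg Prod.snd h)
      · unfold extendPDA; simp only; rw [hPa1, hc1]; rfl
      · unfold extendPDA; simp only; rw [hPa1, hc2]; rfl
    · -- distinct outer cells, apply outer PDA
      obtain ⟨hfne, hkne, hc1, hc2⟩ := h1d f1 k1 f1' k1' sa hsame hPa1 hPb1
      refine ⟨?_, ?_, ?_, ?_⟩
      · intro h; exact hfne (congrArg Prod.fst h)
      · intro h; exact hkne (congrArg Prod.fst h)
      · exact extendPDA_eq_none_of_left hc1
      · exact extendPDA_eq_none_of_left hc2
end

section
/- For positive integers D and t with 1 ≤ t ≤ D−1, the array P_{D,t} of size C(D,t) × D, with rows indexed by t-subsets T of [D] and columns by elements d ∈ [D], whose entry is * if d ∈ T and equal to the lexicographic rank of the (t+1)-subset T ∪ {d} if d ∉ T, is a (t+1)-regular (D, C(D,t), C(D−1,t−1), C(D,t+1)) PDA; i.e., every column has exactly C(D−1,t−1) stars, every integer in [C(D,t+1)] appears exactly t+1 times, and the PDA condition A3 holds. -/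
/-- Algorithm 2: the array `P_{D,t}` with rows indexed by `t`-subsets `T` of `[D]`
and columns by `d ∈ [D]`; the entry is a star (`none`) if `d ∈ T`, and otherwise the
rank `y (T ∪ {d})` of the `(t+1)`-subset `T ∪ {d}`. -/
def PDT (D t : ℕ) (y : {T' : Finset (Fin D) // T'.card = t + 1} → ℕ) :
    {T : Finset (Fin D) // T.card = t} → Fin D → Option ℕ :=
  fun T d =>
    if hd : d ∈ T.1 then none
    else some (y ⟨insert d T.1, by
      rw [Finset.card_insert_of_notMem hd, T.2]⟩)

/-! The entry `y U` stands exactly at the positions `(U.erase d, d)` with `d ∈ U`, so it occurs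
`t + 1` times; two such positions `(T₁, d₁)`, `(T₂, d₂)` lie in distinct rows and columns, and
`d₂ ∈ T₁`, `d₁ ∈ T₂` put stars at the crossings. Column `d` has its stars in the rows `T ∋ d`,
of which there are `C(D - 1, t - 1)`. -/

open Finset

namespace Finset

variable {α : Type*}

section Insert

variable [DecidableEq α] {s t : Finset α} {a b : α}

lemma eq_of_insert_eq_insert_of_notMem (hs : a ∉ s) (ht : a ∉ t)
    (h : insert a s = insert a t) : s = t := by
  rw [← erase_insert hs, ← erase_insert ht, h]

lemma mem_of_insert_eq_insert_of_ne (hab : a ≠ b) (h : insert a s = insert b t) : b ∈ s :=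
  (mem_insert.1 (h ▸ mem_insert_self b t)).resolve_left hab.symm

lemma ne_and_mem_of_insert_eq_insert (ha : a ∉ s) (hb : b ∉ t) (hne : (s, a) ≠ (t, b))
    (h : insert a s = insert b t) : s ≠ t ∧ a ≠ b ∧ b ∈ s ∧ a ∈ t := by
  have hab : a ≠ b := by
    rintro rfl
    exact hne (by rw [eq_of_insert_eq_insert_of_notMem ha hb h])
  have hbs := mem_of_insert_eq_insert_of_ne hab h
  exact ⟨by rintro rfl; exact hb hbs, hab, hbs, mem_of_insert_eq_insert_of_ne hab.symm h.symm⟩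

end Insert

variable [Fintype α]

lemma card_filter_subtype_card_eq (n : ℕ) (p : Finset α → Prop) [DecidablePred p] :
    #{T : {T : Finset α // #T = n} | p T.1} = #{T ∈ powersetCard n univ | p T} := by
  rw [← card_map (Function.Embedding.subtype _)]
  congr 1
  ext T
  simp [and_comm]

lemma card_filter_subtype_card_mem [DecidableEq α] (n : ℕ) (a : α) :
    #{T : {T : Finset α // #T = n + 1} | a ∈ T.1} = (Fintype.card α - 1).choose n := by
  rw [card_filter_subtype_card_eq (p := (a ∈ ·))]
  simpa using card_filter_powersetCard_subset {a} univ (n + 1) (subset_univ _) (by simp)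

-- The pairs are `(U.erase a, a)` with `a ∈ U`.
lemma card_filter_insert_eq [DecidableEq α] {n : ℕ} (U : Finset α) (hU : #U = n + 1) :
    #{p : {T : Finset α // #T = n} × α | p.2 ∉ p.1.1 ∧ insert p.2 p.1.1 = U} = n + 1 := by
  rw [← hU]
  refine card_bij' (fun p _ => p.2)
    (fun a ha => (⟨U.erase a, by rw [card_erase_of_mem ha, hU, Nat.add_sub_cancel]⟩, a))
    ?_ ?_ ?_ ?_
  · rintro ⟨T, a⟩ hp
    obtain ⟨-, rfl⟩ := (mem_filter.1 hp).2
    exact mem_insert_self a T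
  · intro a ha
    simp [ha]
  · rintro ⟨T, a⟩ hp
    obtain ⟨ha, rfl⟩ := (mem_filter.1 hp).2
    simp [erase_insert ha]
  · intro a ha
    rfl

end Finset

section PDT

variable {D t : ℕ} {y : {T' : Finset (Fin D) // T'.card = t + 1} → ℕ}

lemma PDT_eq_none_iff {T : {T : Finset (Fin D) // T.card = t}} {d : Fin D} :
    PDT D t y T d = none ↔ d ∈ T.1 := by
  unfold PDT; split <;> simp_all

lemma PDT_eq_some_iff {T : {T : Finset (Fin D) // T.card = t}} {d : Fin D} {s : ℕ} :
    PDT D t y T d = some s ↔ ∃ U, y U = s ∧ d ∉ T.1 ∧ insert d T.1 = U.1 := by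
  unfold PDT
  split_ifs with hd
  · simp [hd]
  · simp [hd, T.2]

lemma PDT_eq_some_apply_iff (hy : Function.Injective y) {T : {T : Finset (Fin D) // T.card = t}}
    {d : Fin D} {U : {T' : Finset (Fin D) // T'.card = t + 1}} :
    PDT D t y T d = some (y U) ↔ d ∉ T.1 ∧ insert d T.1 = U.1 := by
  simp [PDT_eq_some_iff, hy.eq_iff, Subtype.ext_iff, U.2]

end PDT

theorem PDT_is_regular_PDA_general (D t : ℕ) (ht : 1 ≤ t)
    (y : {T' : Finset (Fin D) // T'.card = t + 1} → ℕ)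
    (hy_inj : Function.Injective y)
    (hy_range : Set.range y = Set.Icc 1 (D.choose (t + 1))) :
    (∀ d : Fin D,
      (Finset.univ.filter
        (fun T : {T : Finset (Fin D) // T.card = t} => PDT D t y T d = none)).card
        = (D - 1).choose (t - 1)) ∧
    (∀ s ∈ Finset.Icc 1 (D.choose (t + 1)),
      (Finset.univ.filter
        (fun p : {T : Finset (Fin D) // T.card = t} × Fin D =>
          PDT D t y p.1 p.2 = some s)).card = t + 1) ∧
    (∀ (T₁ T₂ : {T : Finset (Fin D) // T.card = t}) (d₁ d₂ : Fin D) (s : ℕ),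
      (T₁, d₁) ≠ (T₂, d₂) →
      PDT D t y T₁ d₁ = some s → PDT D t y T₂ d₂ = some s →
      T₁ ≠ T₂ ∧ d₁ ≠ d₂ ∧ PDT D t y T₁ d₂ = none ∧ PDT D t y T₂ d₁ = none) := by
  refine ⟨fun d => ?_, fun s hs => ?_, ?_⟩
  · obtain ⟨n, rfl⟩ := Nat.exists_eq_add_of_le' ht
    simpa [PDT_eq_none_iff] using card_filter_subtype_card_mem n d
  · obtain ⟨U, rfl⟩ : s ∈ Set.range y := hy_range ▸ by simpa using hs
    simpa only [PDT_eq_some_apply_iff hy_inj] using card_filter_insert_eq U.1 U.2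
  · intro T₁ T₂ d₁ d₂ s hne h₁ h₂
    obtain ⟨U₁, rfl, hd₁, hU₁⟩ := PDT_eq_some_iff.1 h₁
    obtain ⟨U₂, hU, hd₂, hU₂⟩ := PDT_eq_some_iff.1 h₂
    have hins : insert d₁ T₁.1 = insert d₂ T₂.1 := by rw [hU₁, hU₂, hy_inj hU]
    have hne' : (T₁.1, d₁) ≠ (T₂.1, d₂) := by simpa [Subtype.ext_iff] using hne
    obtain ⟨hT, hd, hd₂T₁, hd₁T₂⟩ := ne_and_mem_of_insert_eq_insert hd₁ hd₂ hne' hins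
    exact ⟨fun h => hT (congrArg Subtype.val h), hd, PDT_eq_none_iff.2 hd₂T₁,
      PDT_eq_none_iff.2 hd₁T₂⟩

/-- for `1 ≤ t ≤ D−1` and `y` the lexicographic rank (a bijection from
`(t+1)`-subsets of `[D]` onto `[C(D,t+1)]`), the array `P_{D,t}` is a
`(t+1)`-regular `(D, C(D,t), C(D−1,t−1), C(D,t+1))` PDA: every column has exactly
`C(D−1,t−1)` stars, every integer in `[C(D,t+1)]` appears exactly `t+1` times, and
condition A3 holds. -/
theorem PDT_is_regular_PDA (D t : ℕ) (ht : 1 ≤ t) (htD : t ≤ D - 1)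
    (y : {T' : Finset (Fin D) // T'.card = t + 1} → ℕ)
    (hy_inj : Function.Injective y)
    (hy_range : Set.range y = Set.Icc 1 (D.choose (t + 1))) :
    (∀ d : Fin D,
      (Finset.univ.filter
        (fun T : {T : Finset (Fin D) // T.card = t} => PDT D t y T d = none)).card
        = (D - 1).choose (t - 1)) ∧
    (∀ s ∈ Finset.Icc 1 (D.choose (t + 1)),
      (Finset.univ.filter
        (fun p : {T : Finset (Fin D) // T.card = t} × Fin D =>
          PDT D t y p.1 p.2 = some s)).card = t + 1) ∧
    (∀ (T₁ T₂ : {T : Finset (Fin D) // T.card = t}) (d₁ d₂ : Fin D) (s : ℕ),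
      (T₁, d₁) ≠ (T₂, d₂) →
      PDT D t y T₁ d₁ = some s → PDT D t y T₂ d₂ = some s →
      T₁ ≠ T₂ ∧ d₁ ≠ d₂ ∧ PDT D t y T₁ d₂ = none ∧ PDT D t y T₂ d₁ = none) :=
  PDT_is_regular_PDA_general D t ht y hy_inj hy_range
end
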